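/- For each fixed x ≥ 0 and λ > 0, the Laguerre transition law W(·|x) defined by W(k|x) = (e^{-x/λ}/(1+λ)) (λ/(1+λ))^k ∑_{j=0}^∞ (x/(λ(1+λ)))^j (k+j)!/((j!)^2 k!) is a probability mass function on ℕ with mean x + λ. -/

import Mathlib

/-!
`W(·|x)` is a Poisson mixture of negative binomial laws: with `z = x / λ` and `q = λ / (1 + λ)`,
the `j`-th summand of the series is the Poisson(`z`) weight of `j` times the probability of `k`
failures before the `(j + 1)`-st success in trials failing with probability `q`. Every component
is a probability mass function with mean `(j + 1) q / (1 - q) = (j + 1) λ`, and all terms are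
nonnegative, so the order of summation may be exchanged: the total mass is `1` and the mean is
`λ (z + 1) = x + λ`.
-/

/-- The Laguerre channel transition pmf `W(k|x)` with noise parameter `lam`. -/
noncomputable def laguerreW (lam x : ℝ) (k : ℕ) : ℝ :=
  Real.exp (-x / lam) / (1 + lam) * (lam / (1 + lam)) ^ k *
    ∑' j : ℕ, (x / (lam * (1 + lam))) ^ j *
      ((k + j).factorial : ℝ) / ((j.factorial : ℝ) ^ 2 * (k.factorial : ℝ))

open Real

theorem hasSum_tsum_swap_of_nonneg {β γ : Type*} {G : β × γ → ℝ} {g : β → ℝ} {S : ℝ}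
    (hG : 0 ≤ G) (hrow : ∀ b, HasSum (fun c => G (b, c)) (g b)) (hcol : HasSum g S) :
    HasSum (fun c => ∑' b, G (b, c)) S := by
  have hsum : Summable G := (summable_prod_of_nonneg hG).2
    ⟨fun b => (hrow b).summable, by simpa only [fun b => (hrow b).tsum_eq] using hcol.summable⟩
  have hGS : HasSum G S := hcol.unique (hsum.hasSum.prod_fiberwise hrow) ▸ hsum.hasSum
  have hswap : HasSum (G ∘ Prod.swap) S := (Equiv.prodComm γ β).hasSum_iff.2 hGS
  exact hswap.prod_fiberwise fun c => (hswap.summable.prod_factor c).hasSum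

noncomputable def poissonWeight (z : ℝ) (j : ℕ) : ℝ := exp (-z) * z ^ j / j.factorial

noncomputable def negBinomialWeight (j : ℕ) (q : ℝ) (k : ℕ) : ℝ :=
  (1 - q) ^ (j + 1) * (k + j).choose j * q ^ k

lemma poissonWeight_nonneg {z : ℝ} (hz : 0 ≤ z) (j : ℕ) : 0 ≤ poissonWeight z j := by
  unfold poissonWeight; positivity

lemma hasSum_poissonWeight (z : ℝ) : HasSum (poissonWeight z) 1 := by
  have h := (NormedSpace.expSeries_div_hasSum_exp z).mul_left (exp (-z))
  rw [← exp_eq_exp_ℝ, ← exp_add, neg_add_cancel, exp_zero] at h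
  unfold poissonWeight
  simpa only [mul_div_assoc] using h

lemma succ_mul_poissonWeight_succ (z : ℝ) (j : ℕ) :
    (j + 1 : ℕ) * poissonWeight z (j + 1) = z * poissonWeight z j := by
  rw [poissonWeight, poissonWeight, Nat.factorial_succ]
  push_cast
  field_simp
  ring

lemma hasSum_mul_poissonWeight (z : ℝ) : HasSum (fun j : ℕ => j * poissonWeight z j) z := by
  have h := (hasSum_poissonWeight z).mul_left z
  rw [mul_one] at h
  simp only [← succ_mul_poissonWeight_succ] at h
  simpa using h.zero_add (f := fun j : ℕ => (j : ℝ) * poissonWeight z j)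

lemma negBinomialWeight_nonneg (j : ℕ) {q : ℝ} (hq₀ : 0 ≤ q) (hq₁ : q ≤ 1) (k : ℕ) :
    0 ≤ negBinomialWeight j q k := by
  have : 0 ≤ 1 - q := by linarith
  unfold negBinomialWeight; positivity

lemma hasSum_negBinomialWeight (j : ℕ) {q : ℝ} (hq : |q| < 1) :
    HasSum (negBinomialWeight j q) 1 := by
  have h1q : (1 - q) ^ (j + 1) ≠ 0 := pow_ne_zero _ (by linarith [le_abs_self q])
  have h := (hasSum_choose_mul_geometric_of_norm_lt_one j hq).mul_left ((1 - q) ^ (j + 1))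
  rw [mul_one_div_cancel h1q] at h
  unfold negBinomialWeight
  simpa only [mul_assoc] using h

lemma succ_mul_negBinomialWeight_succ (j : ℕ) {q : ℝ} (hq : q ≠ 1) (k : ℕ) :
    (k + 1 : ℕ) * negBinomialWeight j q (k + 1) =
      (j + 1) * (q / (1 - q)) * negBinomialWeight (j + 1) q k := by
  have hchoose : ((k + 1 + j).choose (j + 1) : ℝ) * (j + 1) = (k + 1 + j).choose j * (k + 1) := by
    have := Nat.choose_succ_right_eq (k + 1 + j) j
    rw [Nat.add_sub_cancel] at this
    exact_mod_cast this
  have h1q : 1 - q ≠ 0 := sub_ne_zero.2 hq.symm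
  rw [negBinomialWeight, negBinomialWeight, show k + (j + 1) = k + 1 + j by omega]
  push_cast
  field_simp
  linear_combination -(1 - q) ^ (j + 2) * q ^ (k + 1) * hchoose

lemma hasSum_mul_negBinomialWeight (j : ℕ) {q : ℝ} (hq : |q| < 1) :
    HasSum (fun k : ℕ => k * negBinomialWeight j q k) ((j + 1) * (q / (1 - q))) := by
  have h := (hasSum_negBinomialWeight (j + 1) hq).mul_left ((j + 1) * (q / (1 - q)))
  rw [mul_one] at h
  simp only [← succ_mul_negBinomialWeight_succ j (by linarith [le_abs_self q] : q ≠ 1)] at h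
  simpa using h.zero_add (f := fun k : ℕ => (k : ℝ) * negBinomialWeight j q k)

lemma laguerreW_eq_tsum {lam : ℝ} (hlam : 0 < lam) (x : ℝ) (k : ℕ) :
    laguerreW lam x k =
      ∑' j, poissonWeight (x / lam) j * negBinomialWeight j (lam / (1 + lam)) k := by
  have hlam₁ : 1 + lam ≠ 0 := by positivity
  rw [laguerreW, ← tsum_mul_left]
  congr 1 with j
  rw [← Nat.add_choose_mul_factorial_mul_factorial k j, poissonWeight, negBinomialWeight,
    show 1 - lam / (1 + lam) = (1 + lam)⁻¹ by field_simp; ring,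
    show x / (lam * (1 + lam)) = x / lam * (1 + lam)⁻¹ by field_simp, neg_div,
    div_eq_mul_inv (exp _)]
  generalize x / lam = z
  generalize lam / (1 + lam) = q
  generalize (1 + lam)⁻¹ = r
  push_cast
  field_simp
  ring

theorem laguerreW_pmf_and_mean (x lam : ℝ) (hx : 0 ≤ x) (hlam : 0 < lam) :
    HasSum (fun k : ℕ => laguerreW lam x k) 1 ∧
    (∑' k : ℕ, (k : ℝ) * laguerreW lam x k) = x + lam := by
  simp only [laguerreW_eq_tsum hlam x, ← tsum_mul_left, mul_left_comm (_ : ℝ) (poissonWeight _ _)]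
  set z := x / lam
  set q := lam / (1 + lam)
  have hz : 0 ≤ z := by positivity
  have hq₀ : 0 ≤ q := by positivity
  have hq₁ : q < 1 := (div_lt_one (by positivity)).2 (by linarith)
  have hq : |q| < 1 := by rwa [abs_of_nonneg hq₀]
  constructor
  · refine hasSum_tsum_swap_of_nonneg
      (G := fun jk => poissonWeight z jk.1 * negBinomialWeight jk.1 q jk.2)
      (fun jk => mul_nonneg (poissonWeight_nonneg hz _) (negBinomialWeight_nonneg _ hq₀ hq₁.le _))
      (fun j => ?_) (hasSum_poissonWeight z)
    simpa using (hasSum_negBinomialWeight j hq).mul_left (poissonWeight z j)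
  · have hmean : HasSum (fun j : ℕ => poissonWeight z j * ((j + 1) * (q / (1 - q))))
        ((z + 1) * (q / (1 - q))) :=
      (((hasSum_mul_poissonWeight z).add (hasSum_poissonWeight z)).mul_right
        (q / (1 - q))).congr_fun fun j => by ring
    have hodds : q / (1 - q) = lam := by
      simp only [q]; field_simp; ring
    refine (hasSum_tsum_swap_of_nonneg
      (G := fun jk => poissonWeight z jk.1 * (jk.2 * negBinomialWeight jk.1 q jk.2))
      (fun jk => ?_) (fun j => ?_) hmean).tsum_eq.trans ?_
    · exact mul_nonneg (poissonWeight_nonneg hz _)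
        (mul_nonneg jk.2.cast_nonneg (negBinomialWeight_nonneg _ hq₀ hq₁.le _))
    · exact (hasSum_mul_negBinomialWeight j hq).mul_left (poissonWeight z j)
    · rw [hodds]; simp only [z]; field_simp
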